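/- arXiv:1809.01293 — 8 statements merged into one kernel-verified Lean document; each statement's English description precedes it below -/
import Mathlib

section
/- Suppose the M differentiable curves θ_1, …, θ_M : [0,∞) → ℝ^d solve the SVGD flow θ_i′(τ) = b_i(θ_1(τ), …, θ_M(τ)) for all τ ≥ 0, where b_i is the SVGD drift. Then, with λ = m_K − H_F·L_K, for every τ ≥ 0 one has √(Σ_{i,j=1}^M ‖θ_i(τ) − θ_j(τ)‖²) ≤ C_0 · exp(−λτ), where C_0 = √(Σ_{i,j=1}^M ‖θ_i(0) − θ_j(0)‖²). In particular, when λ > 0 the particles of SVGD collapse to a single point as τ → ∞. -/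
open Finset
open scoped InnerProductSpace

/-!
Write `V = ∑ᵢⱼ ‖θᵢ - θⱼ‖²`. The SVGD drift is contractive in the sense that
`⟪bᵢ - bⱼ, θᵢ - θⱼ⟫ ≤ -λ ‖θᵢ - θⱼ‖²`: the kernel-gradient part contributes `-m_K ‖θᵢ - θⱼ‖²`
by strong monotonicity, and the driving part at most `H_F L_K ‖θᵢ - θⱼ‖²` by Cauchy–Schwarz.
Hence `V' ≤ -2λ V`, so Grönwall gives `V(τ) ≤ V(0) e^{-2λτ}`; take square roots.
-/

theorem le_mul_exp_of_hasDerivAt_le_mul {f f' : ℝ → ℝ} {k a b : ℝ} (hab : a ≤ b)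
    (hf : ∀ t ∈ Set.Icc a b, HasDerivAt f (f' t) t)
    (bound : ∀ t ∈ Set.Ico a b, f' t ≤ k * f t) :
    f b ≤ f a * Real.exp (k * (b - a)) := by
  have hcont : ContinuousOn f (Set.Icc a b) := fun t ht =>
    (hf t ht).continuousAt.continuousWithinAt
  have := le_gronwallBound_of_liminf_deriv_right_le hcont
    (fun t ht _ hr => (hf t (Set.Ico_subset_Icc_self ht)).hasDerivWithinAt.liminf_right_slope_le hr)
    le_rfl (fun t ht => (bound t ht).trans (add_zero _).ge) b (Set.right_mem_Icc.2 hab)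
  rwa [gronwallBound_ε0] at this

section

variable {ι E : Type*} [Fintype ι] [NormedAddCommGroup E]

def sumSqDist (x : ι → E) : ℝ := ∑ i, ∑ j, ‖x i - x j‖ ^ 2

theorem sumSqDist_nonneg (x : ι → E) : 0 ≤ sumSqDist x := by
  unfold sumSqDist
  positivity

variable [InnerProductSpace ℝ E]

theorem hasDerivAt_sumSqDist {θ : ι → ℝ → E} {θ' : ι → E} {t : ℝ}
    (hθ : ∀ i, HasDerivAt (θ i) (θ' i) t) :
    HasDerivAt (fun s => sumSqDist (θ · s))
      (∑ i, ∑ j, 2 * ⟪θ i t - θ j t, θ' i - θ' j⟫_ℝ) t :=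
  HasDerivAt.fun_sum fun i _ => HasDerivAt.fun_sum fun j _ => ((hθ i).sub (hθ j)).norm_sq

theorem sqrt_sumSqDist_le_of_contracting_flow {c : ℝ} (b : (ι → E) → ι → E)
    (hb : ∀ x i j, ⟪b x i - b x j, x i - x j⟫_ℝ ≤ -c * ‖x i - x j‖ ^ 2)
    {θ : ι → ℝ → E} (hθ : ∀ i t, 0 ≤ t → HasDerivAt (θ i) (b (θ · t) i) t)
    {τ : ℝ} (hτ : 0 ≤ τ) :
    √(sumSqDist (θ · τ)) ≤ √(sumSqDist (θ · 0)) * Real.exp (-c * τ) := by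
  have hV : sumSqDist (θ · τ) ≤ sumSqDist (θ · 0) * Real.exp (-2 * c * (τ - 0)) := by
    refine le_mul_exp_of_hasDerivAt_le_mul hτ (fun t ht => hasDerivAt_sumSqDist
      fun i => hθ i t ht.1) fun t _ => ?_
    rw [sumSqDist, mul_sum]
    refine sum_le_sum fun i _ => ?_
    rw [mul_sum]
    refine sum_le_sum fun j _ => ?_
    rw [real_inner_comm]
    linarith [hb (θ · t) i j]
  rw [Real.sqrt_le_left (by positivity), mul_pow, Real.sq_sqrt (sumSqDist_nonneg _),
    ← Real.exp_nat_mul]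
  convert hV using 3
  push_cast
  ring

theorem inner_sub_sub_smul_le {K : E → ℝ} {gradK : E → E} {m L H : ℝ}
    (hgradK : ∀ a b, ⟪gradK a - gradK b, a - b⟫_ℝ ≤ -m * ‖a - b‖ ^ 2)
    (hK : ∀ a b, |K a - K b| ≤ L * ‖a - b‖) (u v : E) {f : E} (hf : ‖f‖ ≤ H) :
    ⟪(gradK u - gradK v) - (K u - K v) • f, u - v⟫_ℝ ≤ -(m - H * L) * ‖u - v‖ ^ 2 := by
  have hforce : -⟪(K u - K v) • f, u - v⟫_ℝ ≤ H * L * ‖u - v‖ ^ 2 :=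
    calc -⟪(K u - K v) • f, u - v⟫_ℝ ≤ |K u - K v| * (‖f‖ * ‖u - v‖) := by
          rw [real_inner_smul_left]
          refine (neg_le_abs _).trans ?_
          rw [abs_mul]
          gcongr
          exact abs_real_inner_le_norm _ _
      _ ≤ (L * ‖u - v‖) * (H * ‖u - v‖) := by
          gcongr
          · exact (abs_nonneg _).trans (hK u v)
          · exact hK u v
      _ = H * L * ‖u - v‖ ^ 2 := by ring
  rw [inner_sub_left]
  linarith [hgradK u v]

noncomputable def svgdDrift (K : E → ℝ) (gradK F : E → E) (x : ι → E) (i : ι) : E :=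
  (Fintype.card ι : ℝ)⁻¹ • ∑ q, (gradK (x i - x q) - K (x i - x q) • F (x q))

theorem inner_svgdDrift_sub_le {K : E → ℝ} {gradK F : E → E} {m L H : ℝ}
    (hgradK : ∀ a b, ⟪gradK a - gradK b, a - b⟫_ℝ ≤ -m * ‖a - b‖ ^ 2)
    (hK : ∀ a b, |K a - K b| ≤ L * ‖a - b‖) (hF : ∀ θ, ‖F θ‖ ≤ H) (x : ι → E) (i j : ι) :
    ⟪svgdDrift K gradK F x i - svgdDrift K gradK F x j, x i - x j⟫_ℝ ≤
      -(m - H * L) * ‖x i - x j‖ ^ 2 := by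
  set term : ι → E := fun q =>
    (gradK (x i - x q) - gradK (x j - x q)) - (K (x i - x q) - K (x j - x q)) • F (x q)
  have hdiff : svgdDrift K gradK F x i - svgdDrift K gradK F x j =
      (Fintype.card ι : ℝ)⁻¹ • ∑ q, term q := by
    simp only [svgdDrift, term, ← smul_sub, ← sum_sub_distrib, sub_smul]
    congr 1
    exact sum_congr rfl fun q _ => by abel
  have hterm (q : ι) : ⟪term q, x i - x j⟫_ℝ ≤ -(m - H * L) * ‖x i - x j‖ ^ 2 := by
    simpa only [sub_sub_sub_cancel_right] using
      inner_sub_sub_smul_le hgradK hK (x i - x q) (x j - x q) (hF (x q))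
  have hcard : (0 : ℝ) < Fintype.card ι := by exact_mod_cast Fintype.card_pos_iff.2 ⟨i⟩
  calc _ = (Fintype.card ι : ℝ)⁻¹ * ∑ q, ⟪term q, x i - x j⟫_ℝ := by
        rw [hdiff, real_inner_smul_left, sum_inner]
    _ ≤ (Fintype.card ι : ℝ)⁻¹ * ∑ _q : ι, -(m - H * L) * ‖x i - x j‖ ^ 2 := by
        gcongr with q
        exact hterm q
    _ = -(m - H * L) * ‖x i - x j‖ ^ 2 := by
        rw [sum_const, card_univ, nsmul_eq_mul]
        field_simp

end

theorem svgd_particle_collapse_general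
    (d M : ℕ)
    (K : EuclideanSpace ℝ (Fin d) → ℝ)
    (gradK F : EuclideanSpace ℝ (Fin d) → EuclideanSpace ℝ (Fin d))
    (m_K H_F L_K : ℝ)
    (hgradK : ∀ a b : EuclideanSpace ℝ (Fin d),
      ⟪gradK a - gradK b, a - b⟫_ℝ ≤ -m_K * ‖a - b‖ ^ 2)
    (hK_lip : ∀ a b : EuclideanSpace ℝ (Fin d), |K a - K b| ≤ L_K * ‖a - b‖)
    (hF_bdd : ∀ θ : EuclideanSpace ℝ (Fin d), ‖F θ‖ ≤ H_F)
    (θ : Fin M → ℝ → EuclideanSpace ℝ (Fin d))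
    (hθ : ∀ (i : Fin M) (τ : ℝ), 0 ≤ τ →
      HasDerivAt (θ i)
        ((M : ℝ)⁻¹ • ∑ q : Fin M,
          (gradK (θ i τ - θ q τ) - K (θ i τ - θ q τ) • F (θ q τ))) τ)
    (τ : ℝ) (hτ : 0 ≤ τ) :
    Real.sqrt (∑ i : Fin M, ∑ j : Fin M, ‖θ i τ - θ j τ‖ ^ 2) ≤
      Real.sqrt (∑ i : Fin M, ∑ j : Fin M, ‖θ i 0 - θ j 0‖ ^ 2) *
        Real.exp (-(m_K - H_F * L_K) * τ) :=
  sqrt_sumSqDist_le_of_contracting_flow (svgdDrift K gradK F)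
    (inner_svgdDrift_sub_le hgradK hK_lip hF_bdd)
    (fun i t ht => by simpa only [svgdDrift, Fintype.card_fin] using hθ i t ht) hτ

/-- Under Assumptions 1.2, 2.1 and 2.2, exact SVGD particles collapse:
the expected particle distance decays as `C₀ · exp (-(m_K - H_F·L_K) τ)`. -/
theorem svgd_particle_collapse
    (d M : ℕ) (hM : 1 ≤ M)
    (K : EuclideanSpace ℝ (Fin d) → ℝ)
    (gradK F : EuclideanSpace ℝ (Fin d) → EuclideanSpace ℝ (Fin d))
    (m_K H_F L_K : ℝ) (hm_K : 0 < m_K)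
    (hgradK : ∀ a b : EuclideanSpace ℝ (Fin d),
      ⟪gradK a - gradK b, a - b⟫_ℝ ≤ -m_K * ‖a - b‖ ^ 2)
    (hK_lip : ∀ a b : EuclideanSpace ℝ (Fin d), |K a - K b| ≤ L_K * ‖a - b‖)
    (hF_bdd : ∀ θ : EuclideanSpace ℝ (Fin d), ‖F θ‖ ≤ H_F)
    (θ : Fin M → ℝ → EuclideanSpace ℝ (Fin d))
    (hθ : ∀ (i : Fin M) (τ : ℝ), 0 ≤ τ →
      HasDerivAt (θ i)
        ((M : ℝ)⁻¹ • ∑ q : Fin M,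
          (gradK (θ i τ - θ q τ) - K (θ i τ - θ q τ) • F (θ q τ))) τ)
    (τ : ℝ) (hτ : 0 ≤ τ) :
    Real.sqrt (∑ i : Fin M, ∑ j : Fin M, ‖θ i τ - θ j τ‖ ^ 2) ≤
      Real.sqrt (∑ i : Fin M, ∑ j : Fin M, ‖θ i 0 - θ j 0‖ ^ 2) *
        Real.exp (-(m_K - H_F * L_K) * τ) :=
  svgd_particle_collapse_general d M K gradK F m_K H_F L_K hgradK hK_lip hF_bdd θ hθ τ hτ
end

section
/- For any configuration θ_1, …, θ_M ∈ ℝ^d, the SVGD drift satisfies the dissipation inequality Σ_{i,j=1}^M ⟨b_i − b_j, θ_i − θ_j⟩ ≤ −(m_K − H_F·L_K) Σ_{i,j=1}^M ‖θ_i − θ_j‖². -/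
open Finset
open scoped InnerProductSpace

/-! Since `(θ i - θ q) - (θ j - θ q) = θ i - θ j`, each of the `M` summands of `b i - b j` pairs
with `θ i - θ j` to at most `-(m_K - H_F L_K) ‖θ i - θ j‖²`, and averaging over `q` keeps this
bound; summing over `i, j` gives the claim. -/

section

variable {E : Type*} [NormedAddCommGroup E] [InnerProductSpace ℝ E]

lemma inner_average_le {ι : Type*} {s : Finset ι} (hs : s.Nonempty) {x : ι → E} {v : E} {c : ℝ}
    (h : ∀ q ∈ s, ⟪x q, v⟫_ℝ ≤ c) :
    ⟪(#s : ℝ)⁻¹ • ∑ q ∈ s, x q, v⟫_ℝ ≤ c := by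
  rw [real_inner_smul_left, sum_inner, inv_mul_le_iff₀ (by exact_mod_cast hs.card_pos),
    ← nsmul_eq_mul]
  exact sum_le_card_nsmul s _ c h

/-- The gradient part contributes `-m ‖a - b‖²`; the part `-K x • f` at most `H L ‖a - b‖²`,
by Cauchy–Schwarz and the Lipschitz bound on `K`. -/
lemma inner_drift_sub_le {gradK : E → E} {K : E → ℝ} {m L H : ℝ}
    (hgradK : ∀ a b, ⟪gradK a - gradK b, a - b⟫_ℝ ≤ -m * ‖a - b‖ ^ 2)
    (hK_lip : ∀ a b, |K a - K b| ≤ L * ‖a - b‖) {f : E} (hf : ‖f‖ ≤ H) (a b : E) :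
    ⟪(gradK a - K a • f) - (gradK b - K b • f), a - b⟫_ℝ ≤ -(m - H * L) * ‖a - b‖ ^ 2 := by
  have hf_inner : |⟪f, a - b⟫_ℝ| ≤ H * ‖a - b‖ :=
    (abs_real_inner_le_norm _ _).trans (by gcongr)
  have hcross : -((K a - K b) * ⟪f, a - b⟫_ℝ) ≤ H * L * ‖a - b‖ ^ 2 :=
    calc -((K a - K b) * ⟪f, a - b⟫_ℝ)
        ≤ |K a - K b| * |⟪f, a - b⟫_ℝ| := by rw [← abs_mul]; exact neg_le_abs _
      _ ≤ (L * ‖a - b‖) * (H * ‖a - b‖) :=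
          mul_le_mul (hK_lip a b) hf_inner (abs_nonneg _) ((abs_nonneg _).trans (hK_lip a b))
      _ = H * L * ‖a - b‖ ^ 2 := by ring
  have hsplit : (gradK a - K a • f) - (gradK b - K b • f)
      = (gradK a - gradK b) - (K a - K b) • f := by
    rw [sub_smul]; abel
  rw [hsplit, inner_sub_left, real_inner_smul_left]
  linarith [hgradK a b]

end

theorem svgd_drift_dissipation_general
    (d M : ℕ)
    (K : EuclideanSpace ℝ (Fin d) → ℝ)
    (gradK F : EuclideanSpace ℝ (Fin d) → EuclideanSpace ℝ (Fin d))
    (m_K H_F L_K : ℝ)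
    (hgradK : ∀ a b : EuclideanSpace ℝ (Fin d),
      ⟪gradK a - gradK b, a - b⟫_ℝ ≤ -m_K * ‖a - b‖ ^ 2)
    (hK_lip : ∀ a b : EuclideanSpace ℝ (Fin d), |K a - K b| ≤ L_K * ‖a - b‖)
    (hF_bdd : ∀ θ : EuclideanSpace ℝ (Fin d), ‖F θ‖ ≤ H_F)
    (θ : Fin M → EuclideanSpace ℝ (Fin d)) :
    ∑ i : Fin M, ∑ j : Fin M,
      ⟪((M : ℝ)⁻¹ • ∑ q : Fin M, (gradK (θ i - θ q) - K (θ i - θ q) • F (θ q))) -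
        ((M : ℝ)⁻¹ • ∑ q : Fin M, (gradK (θ j - θ q) - K (θ j - θ q) • F (θ q))),
        θ i - θ j⟫_ℝ
      ≤ -(m_K - H_F * L_K) * ∑ i : Fin M, ∑ j : Fin M, ‖θ i - θ j‖ ^ 2 := by
  simp_rw [mul_sum]
  refine sum_le_sum fun i _ ↦ sum_le_sum fun j _ ↦ ?_
  have hterm (q : Fin M) :
      ⟪(gradK (θ i - θ q) - K (θ i - θ q) • F (θ q)) -
        (gradK (θ j - θ q) - K (θ j - θ q) • F (θ q)), θ i - θ j⟫_ℝ
        ≤ -(m_K - H_F * L_K) * ‖θ i - θ j‖ ^ 2 := by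
    simpa only [sub_sub_sub_cancel_right] using
      inner_drift_sub_le hgradK hK_lip (hF_bdd (θ q)) (θ i - θ q) (θ j - θ q)
  have hmean := inner_average_le (univ_nonempty_iff.mpr ⟨i⟩) fun q _ ↦ hterm q
  rwa [sum_sub_distrib, smul_sub, card_univ, Fintype.card_fin] at hmean

/-- the SVGD drift satisfies the dissipation inequality
`Σ_{i,j} ⟨b_i − b_j, θ_i − θ_j⟩ ≤ −(m_K − H_F·L_K) Σ_{i,j} ‖θ_i − θ_j‖²`. -/
theorem svgd_drift_dissipation
    (d M : ℕ) (hM : 1 ≤ M)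
    (K : EuclideanSpace ℝ (Fin d) → ℝ)
    (gradK F : EuclideanSpace ℝ (Fin d) → EuclideanSpace ℝ (Fin d))
    (m_K H_F L_K : ℝ) (hm_K : 0 < m_K)
    (hgradK : ∀ a b : EuclideanSpace ℝ (Fin d),
      ⟪gradK a - gradK b, a - b⟫_ℝ ≤ -m_K * ‖a - b‖ ^ 2)
    (hK_lip : ∀ a b : EuclideanSpace ℝ (Fin d), |K a - K b| ≤ L_K * ‖a - b‖)
    (hF_bdd : ∀ θ : EuclideanSpace ℝ (Fin d), ‖F θ‖ ≤ H_F)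
    (θ : Fin M → EuclideanSpace ℝ (Fin d)) :
    ∑ i : Fin M, ∑ j : Fin M,
      ⟪((M : ℝ)⁻¹ • ∑ q : Fin M, (gradK (θ i - θ q) - K (θ i - θ q) • F (θ q))) -
        ((M : ℝ)⁻¹ • ∑ q : Fin M, (gradK (θ j - θ q) - K (θ j - θ q) • F (θ q))),
        θ i - θ j⟫_ℝ
      ≤ -(m_K - H_F * L_K) * ∑ i : Fin M, ∑ j : Fin M, ‖θ i - θ j‖ ^ 2 :=
  svgd_drift_dissipation_general d M K gradK F m_K H_F L_K hgradK hK_lip hF_bdd θ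
end

section
/- Let λ > 0 and c ≥ 0, and let v : ℝ → ℝ be differentiable with v(τ) > 0 for all τ ≥ 0 and v′(τ) ≤ −2λ·v(τ) + c·√(v(τ)) for all τ ≥ 0. Then for all τ ≥ 0, √(v(τ)) ≤ (√(v(0)) − c/(2λ))·exp(−λτ) + c/(2λ). -/
/-! The substitution `u = √v` turns `v' ≤ -2λ v + c √v` into the linear differential inequality
`u' ≤ -λ u + c / 2`, valid because `v > 0`, and Grönwall's comparison with the solution of
`w' = -λ w + c / 2` gives the bound. -/

open Real Set

theorem gronwallBound_neg_eq {lam : ℝ} (hlam : lam ≠ 0) (δ ε x : ℝ) :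
    gronwallBound δ (-lam) ε x = (δ - ε / lam) * exp (-lam * x) + ε / lam := by
  rw [gronwallBound_of_K_ne_0 (neg_ne_zero.2 hlam)]
  field_simp
  ring

theorem le_of_hasDerivWithinAt_le_neg_mul_add {f f' : ℝ → ℝ} {lam ε a b : ℝ} (hlam : lam ≠ 0)
    (hf : ContinuousOn f (Icc a b)) (hf' : ∀ x ∈ Ico a b, HasDerivWithinAt f (f' x) (Ici x) x)
    (bound : ∀ x ∈ Ico a b, f' x ≤ -lam * f x + ε) :
    ∀ x ∈ Icc a b, f x ≤ (f a - ε / lam) * exp (-lam * (x - a)) + ε / lam := by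
  intro x hx
  rw [← gronwallBound_neg_eq hlam]
  exact le_gronwallBound_of_liminf_deriv_right_le hf
    (fun x hx _ hr => (hf' x hx).liminf_right_slope_le hr) le_rfl bound x hx

theorem div_two_mul_sqrt_le {d v lam c : ℝ} (hv : 0 < v)
    (h : d ≤ -2 * lam * v + c * √v) : d / (2 * √v) ≤ -lam * √v + c / 2 := by
  have hs : 0 < √v := sqrt_pos.2 hv
  rw [div_le_iff₀ (by positivity)]
  calc d ≤ -2 * lam * v + c * √v := h
    _ = (-lam * √v + c / 2) * (2 * √v) := by
      linear_combination 2 * lam * mul_self_sqrt hv.le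

theorem sqrt_gronwall_comparison_general
    (lam c : ℝ) (hlam : 0 < lam)
    (v : ℝ → ℝ) (hv : Differentiable ℝ v)
    (hpos : ∀ τ : ℝ, 0 ≤ τ → 0 < v τ)
    (hineq : ∀ τ : ℝ, 0 ≤ τ →
      deriv v τ ≤ -2 * lam * v τ + c * Real.sqrt (v τ))
    (τ : ℝ) (hτ : 0 ≤ τ) :
    Real.sqrt (v τ) ≤
      (Real.sqrt (v 0) - c / (2 * lam)) * Real.exp (-lam * τ) + c / (2 * lam) := by
  have hsqrt : ∀ x ∈ Ico 0 τ,
      HasDerivWithinAt (fun y => √(v y)) (deriv v x / (2 * √(v x))) (Ici x) x :=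
    fun x hx => ((hv x).hasDerivAt.sqrt (hpos x hx.1).ne').hasDerivWithinAt
  have key := le_of_hasDerivWithinAt_le_neg_mul_add hlam.ne'
    hv.continuous.sqrt.continuousOn hsqrt
    (fun x hx => div_two_mul_sqrt_le (hpos x hx.1) (hineq x hx.1)) τ ⟨hτ, le_rfl⟩
  rwa [sub_zero, div_div] at key

/-- square-root differential comparison (Gronwall-type) inequality.
If `v > 0` on `[0,∞)` and `v′ ≤ −2λ v + c √v` there, then
`√(v τ) ≤ (√(v 0) − c/(2λ)) exp(−λτ) + c/(2λ)` for all `τ ≥ 0`. -/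
theorem sqrt_gronwall_comparison
    (lam c : ℝ) (hlam : 0 < lam) (hc : 0 ≤ c)
    (v : ℝ → ℝ) (hv : Differentiable ℝ v)
    (hpos : ∀ τ : ℝ, 0 ≤ τ → 0 < v τ)
    (hineq : ∀ τ : ℝ, 0 ≤ τ →
      deriv v τ ≤ -2 * lam * v τ + c * Real.sqrt (v τ))
    (τ : ℝ) (hτ : 0 ≤ τ) :
    Real.sqrt (v τ) ≤
      (Real.sqrt (v 0) - c / (2 * lam)) * Real.exp (-lam * τ) + c / (2 * lam) :=
  sqrt_gronwall_comparison_general lam c hlam v hv hpos hineq τ hτ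
end

section
/- Let μ^Θ and ρ^Θ be probability measures on (ℝ^d)^M such that, for every i, the pushforward of μ^Θ under the i-th coordinate projection Θ ↦ Θ_i equals μ and the pushforward of ρ^Θ under Θ ↦ Θ_i equals ρ. Let g : ℝ^d → ℝ be 1-Lipschitz and integrable with respect to both μ and ρ, and suppose g_Θ is integrable with respect to both μ^Θ and ρ^Θ. Then g_Θ is 1-Lipschitz with respect to the ℓ² product norm on (ℝ^d)^M, and ∫ g dμ − ∫ g dρ = (1/√M)·(∫ g_Θ dμ^Θ − ∫ g_Θ dρ^Θ). In particular |∫ g dμ − ∫ g dρ| ≤ (1/√M)·|∫ g_Θ dμ^Θ − ∫ g_Θ dρ^Θ|, which yields W_1(μ, ρ) ≤ (1/√M)·W_1(μ^Θ, ρ^Θ). -/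
open MeasureTheory Finset

/-- The particle configuration space `(ℝ^d)^M` with the ℓ² product norm. -/
abbrev ParticleSpace (d M : ℕ) :=
  PiLp 2 fun _ : Fin M => EuclideanSpace ℝ (Fin d)

noncomputable instance (d M : ℕ) : MeasurableSpace (ParticleSpace d M) :=
  MeasurableSpace.comap WithLp.ofLp MeasurableSpace.pi

/-- The lifted test function `g_Θ(Θ) = (1/√M) Σ_i g(Θ_i)`. -/
noncomputable def liftedTest (d M : ℕ) (g : EuclideanSpace ℝ (Fin d) → ℝ)
    (Θ : ParticleSpace d M) : ℝ :=
  (Real.sqrt M)⁻¹ * ∑ i : Fin M, g (Θ i)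

/-!
By the triangle inequality and Cauchy–Schwarz, `∑ᵢ |g(xᵢ) - g(yᵢ)| ≤ ∑ᵢ ‖xᵢ - yᵢ‖ ≤ √M ‖x - y‖₂`,
so the normalisation `1/√M` makes `g_Θ` exactly as Lipschitz as `g`. Since every coordinate
of `Θ` has law `μ` under `μ^Θ`, linearity of the integral gives `∫ g_Θ dμ^Θ = (1/√M) · M ∫ g dμ
= √M ∫ g dμ`, and likewise for `ρ`.
-/

theorem PiLp.sum_dist_le_sqrt_card_mul_dist {ι : Type*} [Fintype ι] {β : ι → Type*}
    [∀ i, SeminormedAddCommGroup (β i)] (x y : PiLp 2 β) :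
    ∑ i, dist (x i) (y i) ≤ √(Fintype.card ι) * dist x y := by
  rw [PiLp.dist_eq_of_L2, ← Real.sqrt_mul (Nat.cast_nonneg _)]
  apply Real.le_sqrt_of_sq_le
  simpa using sq_sum_le_card_mul_sum_sq (s := univ) (f := fun i => dist (x i) (y i))

theorem LipschitzWith.sum_comp_apply_piLp {ι E F : Type*} [Fintype ι]
    [SeminormedAddCommGroup E] [SeminormedAddCommGroup F] {K : NNReal} {g : E → F}
    (hg : LipschitzWith K g) :
    LipschitzWith (K * NNReal.sqrt (Fintype.card ι))
      (fun x : PiLp 2 (fun _ : ι => E) => ∑ i, g (x i)) := by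
  refine LipschitzWith.of_dist_le_mul fun x y => ?_
  calc dist (∑ i, g (x i)) (∑ i, g (y i))
      ≤ ∑ i, dist (g (x i)) (g (y i)) := dist_sum_sum_le _ _ _
    _ ≤ ∑ i, K * dist (x i) (y i) := sum_le_sum fun i _ => hg.dist_le_mul _ _
    _ ≤ K * (√(Fintype.card ι) * dist x y) := by
        rw [← mul_sum]
        exact mul_le_mul_of_nonneg_left (PiLp.sum_dist_le_sqrt_card_mul_dist x y) K.2
    _ = _ := by simp [mul_assoc]

theorem integral_sum_comp_of_map_eq {ι Ω E F : Type*} [Fintype ι] [MeasurableSpace Ω]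
    [MeasurableSpace E] [NormedAddCommGroup F] [NormedSpace ℝ F]
    {ν : Measure Ω} {ν₀ : Measure E} {X : ι → Ω → E} (hX : ∀ i, AEMeasurable (X i) ν)
    (hmap : ∀ i, ν.map (X i) = ν₀) {g : E → F} (hg : Integrable g ν₀) :
    ∫ ω, ∑ i, g (X i ω) ∂ν = Fintype.card ι • ∫ x, g x ∂ν₀ := by
  have hg_map : ∀ i, Integrable g (ν.map (X i)) := fun i => hmap i ▸ hg
  have hcoord : ∀ i, ∫ ω, g (X i ω) ∂ν = ∫ x, g x ∂ν₀ := fun i => by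
    rw [← integral_map (hX i) (hg_map i).aestronglyMeasurable, hmap i]
  rw [integral_finsetSum (f := fun i ω => g (X i ω)) _ fun i _ =>
    (integrable_map_measure (hg_map i).aestronglyMeasurable (hX i)).mp (hg_map i)]
  simp [hcoord]

theorem measurable_particleSpace_apply (d M : ℕ) (i : Fin M) :
    Measurable fun Θ : ParticleSpace d M => Θ i :=
  (measurable_pi_apply i).comp (comap_measurable _)

theorem lipschitzWith_liftedTest {d M : ℕ} {K : NNReal} {g : EuclideanSpace ℝ (Fin d) → ℝ}
    (hg : LipschitzWith K g) : LipschitzWith K (liftedTest d M g) := by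
  rcases Nat.eq_zero_or_pos M with rfl | hM
  · have h_zero : liftedTest d 0 g = fun _ => 0 := funext fun _ => by simp [liftedTest]
    exact h_zero ▸ (LipschitzWith.const (0 : ℝ)).weaken bot_le
  have hsqrt : (0 : ℝ) < √M := Real.sqrt_pos.mpr (Nat.cast_pos.mpr hM)
  have hsum := hg.sum_comp_apply_piLp (ι := Fin M)
  refine LipschitzWith.of_dist_le_mul fun x y => ?_
  calc dist (liftedTest d M g x) (liftedTest d M g y)
      = (√M)⁻¹ * dist (∑ i, g (x i)) (∑ i, g (y i)) := by
        rw [liftedTest, liftedTest, Real.dist_eq, ← mul_sub, abs_mul,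
          abs_of_pos (inv_pos.mpr hsqrt), Real.dist_eq]
    _ ≤ (√M)⁻¹ * (K * √M * dist x y) := by
        gcongr
        simpa using hsum.dist_le_mul x y
    _ = K * dist x y := by field_simp

theorem integral_liftedTest {d M : ℕ} {ν : Measure (ParticleSpace d M)}
    {ν₀ : Measure (EuclideanSpace ℝ (Fin d))}
    (hmap : ∀ i : Fin M, ν.map (fun Θ : ParticleSpace d M => Θ i) = ν₀)
    {g : EuclideanSpace ℝ (Fin d) → ℝ} (hg : Integrable g ν₀) :
    ∫ Θ, liftedTest d M g Θ ∂ν = √M * ∫ x, g x ∂ν₀ := by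
  have hsum := integral_sum_comp_of_map_eq
    (fun i => (measurable_particleSpace_apply d M i).aemeasurable) hmap hg
  simp only [liftedTest, integral_const_mul, hsum, Fintype.card_fin, nsmul_eq_mul]
  rcases Nat.eq_zero_or_pos M with rfl | hM
  · simp
  · have hsqrt : (0 : ℝ) < √M := Real.sqrt_pos.mpr (Nat.cast_pos.mpr hM)
    field_simp
    rw [Real.sq_sqrt (Nat.cast_nonneg M)]

theorem wasserstein_particle_lift_general
    (d M : ℕ) (hM : 1 ≤ M)
    (μ ρ : Measure (EuclideanSpace ℝ (Fin d)))
    (μΘ ρΘ : Measure (ParticleSpace d M))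
    (hμ : ∀ i : Fin M, Measure.map (fun Θ : ParticleSpace d M => Θ i) μΘ = μ)
    (hρ : ∀ i : Fin M, Measure.map (fun Θ : ParticleSpace d M => Θ i) ρΘ = ρ)
    (g : EuclideanSpace ℝ (Fin d) → ℝ) (hg : LipschitzWith 1 g)
    (hgμ : Integrable g μ) (hgρ : Integrable g ρ) :
    LipschitzWith 1 (liftedTest d M g) ∧
      (∫ x, g x ∂μ) - (∫ x, g x ∂ρ) =
        (Real.sqrt M)⁻¹ *
          ((∫ Θ, liftedTest d M g Θ ∂μΘ) - ∫ Θ, liftedTest d M g Θ ∂ρΘ) ∧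
      |(∫ x, g x ∂μ) - ∫ x, g x ∂ρ| ≤
        (Real.sqrt M)⁻¹ *
          |(∫ Θ, liftedTest d M g Θ ∂μΘ) - ∫ Θ, liftedTest d M g Θ ∂ρΘ| := by
  have hsqrt : √(M : ℝ) ≠ 0 := (Real.sqrt_pos.mpr (by exact_mod_cast hM)).ne'
  have heq : (∫ x, g x ∂μ) - (∫ x, g x ∂ρ) =
      (√M)⁻¹ * ((∫ Θ, liftedTest d M g Θ ∂μΘ) - ∫ Θ, liftedTest d M g Θ ∂ρΘ) := by
    rw [integral_liftedTest hμ hgμ, integral_liftedTest hρ hgρ, ← mul_sub,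
      inv_mul_cancel_left₀ hsqrt]
  refine ⟨lipschitzWith_liftedTest hg, heq, ?_⟩
  rw [heq, abs_mul, abs_of_nonneg (by positivity)]

/-- if all coordinate marginals of `μ^Θ` are `μ` and of `ρ^Θ` are `ρ`,
then for a 1-Lipschitz integrable `g`, the lift `g_Θ` is 1-Lipschitz (in the ℓ²
product norm) and `∫ g dμ − ∫ g dρ = (1/√M)(∫ g_Θ dμ^Θ − ∫ g_Θ dρ^Θ)`; in
particular `|∫ g dμ − ∫ g dρ| ≤ (1/√M)|∫ g_Θ dμ^Θ − ∫ g_Θ dρ^Θ|`. -/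
theorem wasserstein_particle_lift
    (d M : ℕ) (hM : 1 ≤ M)
    (μ ρ : Measure (EuclideanSpace ℝ (Fin d)))
    (μΘ ρΘ : Measure (ParticleSpace d M))
    [IsProbabilityMeasure μ] [IsProbabilityMeasure ρ]
    [IsProbabilityMeasure μΘ] [IsProbabilityMeasure ρΘ]
    (hμ : ∀ i : Fin M, Measure.map (fun Θ : ParticleSpace d M => Θ i) μΘ = μ)
    (hρ : ∀ i : Fin M, Measure.map (fun Θ : ParticleSpace d M => Θ i) ρΘ = ρ)
    (g : EuclideanSpace ℝ (Fin d) → ℝ) (hg : LipschitzWith 1 g)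
    (hgμ : Integrable g μ) (hgρ : Integrable g ρ)
    (hgΘμ : Integrable (liftedTest d M g) μΘ)
    (hgΘρ : Integrable (liftedTest d M g) ρΘ) :
    LipschitzWith 1 (liftedTest d M g) ∧
      (∫ x, g x ∂μ) - (∫ x, g x ∂ρ) =
        (Real.sqrt M)⁻¹ *
          ((∫ Θ, liftedTest d M g Θ ∂μΘ) - ∫ Θ, liftedTest d M g Θ ∂ρΘ) ∧
      |(∫ x, g x ∂μ) - ∫ x, g x ∂ρ| ≤
        (Real.sqrt M)⁻¹ *
          |(∫ Θ, liftedTest d M g Θ ∂μΘ) - ∫ Θ, liftedTest d M g Θ ∂ρΘ| :=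
  wasserstein_particle_lift_general d M hM μ ρ μΘ ρΘ hμ hρ g hg hgμ hgρ
end

section
/- Assume F is L_F-Lipschitz, F(0) = 0, and F is dissipative: ⟨F(θ), θ⟩ ≥ m‖θ‖² − b for some m, b > 0 and all θ ∈ ℝ^d. Then the concatenated SPOS drift satisfies ⟨F_Θ(Θ), Θ⟩ ≥ (β⁻¹·m − L_F − 4/η²)·‖Θ‖² − β⁻¹·M·b for every Θ ∈ (ℝ^d)^M, where ⟨F_Θ(Θ), Θ⟩ = Σ_{i=1}^M ⟨(F_Θ(Θ))_i, θ_i⟩. -/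
open Finset
open scoped InnerProductSpace

/-!
The confining term contributes `β⁻¹ (m ‖Θ‖² - M b)` by dissipativity. The two interaction terms
are means over `j` of `K_ij ⟪u_ij, θ_i⟫` with `|K_ij| ≤ k` and `‖u_ij‖ ≤ a ‖θ_i‖ + c ‖θ_j‖`
(`u_ij = F θ_j`, `k = 1`, `c = L_F` for the kernel-weighted drift; `u_ij = θ_i - θ_j`,
`k = 2/η²`, `a = c = 1` for the kernel gradient), so each is bounded by `k (a + c) ‖Θ‖²`:
the cross terms sum to `(∑ ‖θ_i‖)²`, which Cauchy–Schwarz bounds by `M ‖Θ‖²`.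
-/

theorem nonneg_of_norm_sub_le_mul_norm_sub {E E' : Type*} [NormedAddCommGroup E] [Nontrivial E]
    [SeminormedAddCommGroup E'] {F : E → E'} {L : ℝ}
    (hF : ∀ x y, ‖F x - F y‖ ≤ L * ‖x - y‖) : 0 ≤ L := by
  obtain ⟨x, hx⟩ := exists_ne (0 : E)
  have hxF := (norm_nonneg _).trans (hF x 0)
  rw [sub_zero] at hxF
  exact nonneg_of_mul_nonneg_left hxF (norm_pos_iff.mpr hx)

variable {E : Type*} [NormedAddCommGroup E] [InnerProductSpace ℝ E]

theorem Real.exp_neg_sq_div_sq_le_one (r η : ℝ) : Real.exp (-r ^ 2 / η ^ 2) ≤ 1 :=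
  Real.exp_le_one_iff.mpr (div_nonpos_of_nonpos_of_nonneg (neg_nonpos.mpr (sq_nonneg r))
    (sq_nonneg η))

theorem sum_inner_apply_ge_of_dissipative {ι : Type*} [Fintype ι] {F : E → E} {m b : ℝ}
    (hF : ∀ x, m * ‖x‖ ^ 2 - b ≤ ⟪F x, x⟫_ℝ) (θ : ι → E) :
    m * ∑ i, ‖θ i‖ ^ 2 - Fintype.card ι * b ≤ ∑ i, ⟪F (θ i), θ i⟫_ℝ := by
  calc m * ∑ i, ‖θ i‖ ^ 2 - Fintype.card ι * b = ∑ i, (m * ‖θ i‖ ^ 2 - b) := by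
        rw [sum_sub_distrib, mul_sum, sum_const, card_univ, nsmul_eq_mul]
    _ ≤ _ := sum_le_sum fun i _ => hF (θ i)

theorem abs_sum_inv_card_mul_sum_mul_inner_le {ι : Type*} [Fintype ι] {K : ι → ι → ℝ}
    {k a c : ℝ} (hK : ∀ i j, |K i j| ≤ k) (ha : 0 ≤ a) (hc : 0 ≤ c) {u : ι → ι → E}
    {θ : ι → E} (hu : ∀ i j, ‖u i j‖ ≤ a * ‖θ i‖ + c * ‖θ j‖) :
    |∑ i, (Fintype.card ι : ℝ)⁻¹ * ∑ j, K i j * ⟪u i j, θ i⟫_ℝ|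
      ≤ k * (a + c) * ∑ i, ‖θ i‖ ^ 2 := by
  set n : ℝ := (Fintype.card ι : ℝ)
  set S := ∑ i, ‖θ i‖ ^ 2
  set A := ∑ i, ‖θ i‖
  rcases isEmpty_or_nonempty ι with _ | ⟨⟨i₀⟩⟩
  · simp [S]
  have hk : 0 ≤ k := (abs_nonneg _).trans (hK i₀ i₀)
  have hterm : ∀ i j, |K i j * ⟪u i j, θ i⟫_ℝ| ≤ k * (a * ‖θ i‖ ^ 2 + c * (‖θ i‖ * ‖θ j‖)) :=
    fun i j => by
      rw [abs_mul]
      gcongr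
      · exact hK i j
      · calc |⟪u i j, θ i⟫_ℝ| ≤ ‖u i j‖ * ‖θ i‖ := abs_real_inner_le_norm _ _
          _ ≤ (a * ‖θ i‖ + c * ‖θ j‖) * ‖θ i‖ := by gcongr; exact hu i j
          _ = _ := by ring
  have hdiag : ∑ i, ∑ _j : ι, ‖θ i‖ ^ 2 = n * S := by simp [S, n, mul_sum]
  have hcross : ∑ i, ‖θ i‖ * ∑ j, ‖θ j‖ = A ^ 2 := by rw [← sum_mul, sq]
  have hsum : ∑ i, ∑ j, k * (a * ‖θ i‖ ^ 2 + c * (‖θ i‖ * ‖θ j‖))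
      = k * (a * (n * S) + c * A ^ 2) := by
    simp only [mul_add, sum_add_distrib, ← mul_sum, hdiag, hcross]
  have hmean : A ^ 2 / n ≤ S := by
    simpa using pow_sum_div_card_le_sum_pow (s := univ) (fun i _ => norm_nonneg (θ i)) 1
  have hn : n⁻¹ * n ≤ 1 := by rw [mul_comm]; exact mul_inv_le_one
  calc |∑ i, n⁻¹ * ∑ j, K i j * ⟪u i j, θ i⟫_ℝ|
      ≤ n⁻¹ * ∑ i, ∑ j, k * (a * ‖θ i‖ ^ 2 + c * (‖θ i‖ * ‖θ j‖)) := by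
        rw [← mul_sum, abs_mul, abs_of_nonneg (by positivity)]
        gcongr
        exact (abs_sum_le_sum_abs _ _).trans (sum_le_sum fun i _ =>
          (abs_sum_le_sum_abs _ _).trans (sum_le_sum fun j _ => hterm i j))
    _ = k * (a * (n⁻¹ * n) * S + c * (A ^ 2 / n)) := by rw [hsum]; ring
    _ ≤ k * (a * 1 * S + c * S) := by gcongr
    _ = k * (a + c) * S := by ring

theorem spos_concatenated_drift_dissipative_general
    (d M : ℕ) (hd : 1 ≤ d)
    (η β : ℝ) (hβ : 0 < β)
    (F : EuclideanSpace ℝ (Fin d) → EuclideanSpace ℝ (Fin d))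
    (L_F m b : ℝ)
    (hF_lip : ∀ x y : EuclideanSpace ℝ (Fin d), ‖F x - F y‖ ≤ L_F * ‖x - y‖)
    (hF0 : F 0 = 0)
    (hdiss : ∀ x : EuclideanSpace ℝ (Fin d), ⟪F x, x⟫_ℝ ≥ m * ‖x‖ ^ 2 - b)
    (Θ : Fin M → EuclideanSpace ℝ (Fin d)) :
    ∑ i : Fin M,
      ⟪β⁻¹ • F (Θ i)
          + (M : ℝ)⁻¹ • ∑ j : Fin M,
              Real.exp (-‖Θ i - Θ j‖ ^ 2 / η ^ 2) • F (Θ j)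
          - (M : ℝ)⁻¹ • ∑ j : Fin M,
              (-(2 / η ^ 2 * Real.exp (-‖Θ i - Θ j‖ ^ 2 / η ^ 2))) • (Θ i - Θ j),
        Θ i⟫_ℝ
      ≥ (β⁻¹ * m - L_F - 4 / η ^ 2) * (∑ i : Fin M, ‖Θ i‖ ^ 2) - β⁻¹ * M * b := by
  have : Nonempty (Fin d) := ⟨⟨0, hd⟩⟩
  have hL : 0 ≤ L_F := nonneg_of_norm_sub_le_mul_norm_sub hF_lip
  have hK : ∀ i j, |Real.exp (-‖Θ i - Θ j‖ ^ 2 / η ^ 2)| ≤ 1 := fun i j => by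
    rw [Real.abs_exp]; exact Real.exp_neg_sq_div_sq_le_one _ _
  have hdrift := mul_le_mul_of_nonneg_left (sum_inner_apply_ge_of_dissipative hdiss Θ)
    (inv_nonneg.mpr hβ.le)
  have hinteraction := abs_le.mp <| abs_sum_inv_card_mul_sum_mul_inner_le
    (u := fun _ j => F (Θ j)) hK le_rfl hL fun _ j => by simpa [hF0] using hF_lip (Θ j) 0
  have hrepulsion := abs_le.mp <| abs_sum_inv_card_mul_sum_mul_inner_le
    (K := fun i j => -(2 / η ^ 2 * Real.exp (-‖Θ i - Θ j‖ ^ 2 / η ^ 2)))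
    (k := 2 / η ^ 2) (fun i j => by
      rw [abs_neg, abs_mul, abs_of_nonneg (by positivity)]
      exact mul_le_of_le_one_right (by positivity) (hK i j))
    zero_le_one zero_le_one (u := fun i j => Θ i - Θ j) fun i j => by
      simpa using norm_sub_le (Θ i) (Θ j)
  simp only [Fintype.card_fin, inner_sub_left, inner_add_left, real_inner_smul_left, sum_inner,
    sum_sub_distrib, sum_add_distrib, ← mul_sum] at hdrift hinteraction hrepulsion ⊢
  linear_combination hdrift + hinteraction.1 + hrepulsion.2

/-- Lemma E.2, dissipativity part: if `F` is `L_F`-Lipschitz with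
`F 0 = 0` and dissipative (`⟨F θ, θ⟩ ≥ m‖θ‖² − b`), then the concatenated SPOS
drift with the Gaussian kernel `K(θ) = exp(−‖θ‖²/η²)` (whose gradient is
`∇K(θ) = −(2/η²) exp(−‖θ‖²/η²) θ`) satisfies
`⟨F_Θ(Θ), Θ⟩ ≥ (β⁻¹ m − L_F − 4/η²)‖Θ‖² − β⁻¹ M b`. -/
theorem spos_concatenated_drift_dissipative
    (d M : ℕ) (hd : 1 ≤ d) (hM : 1 ≤ M)
    (η β : ℝ) (hη : 0 < η) (hβ : 0 < β)
    (F : EuclideanSpace ℝ (Fin d) → EuclideanSpace ℝ (Fin d))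
    (L_F m b : ℝ) (hm : 0 < m) (hb : 0 < b)
    (hF_lip : ∀ x y : EuclideanSpace ℝ (Fin d), ‖F x - F y‖ ≤ L_F * ‖x - y‖)
    (hF0 : F 0 = 0)
    (hdiss : ∀ x : EuclideanSpace ℝ (Fin d), ⟪F x, x⟫_ℝ ≥ m * ‖x‖ ^ 2 - b)
    (Θ : Fin M → EuclideanSpace ℝ (Fin d)) :
    ∑ i : Fin M,
      ⟪β⁻¹ • F (Θ i)
          + (M : ℝ)⁻¹ • ∑ j : Fin M,
              Real.exp (-‖Θ i - Θ j‖ ^ 2 / η ^ 2) • F (Θ j)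
          - (M : ℝ)⁻¹ • ∑ j : Fin M,
              (-(2 / η ^ 2 * Real.exp (-‖Θ i - Θ j‖ ^ 2 / η ^ 2))) • (Θ i - Θ j),
        Θ i⟫_ℝ
      ≥ (β⁻¹ * m - L_F - 4 / η ^ 2) * (∑ i : Fin M, ‖Θ i‖ ^ 2) - β⁻¹ * M * b :=
  spos_concatenated_drift_dissipative_general d M hd η β hβ F L_F m b hF_lip hF0 hdiss Θ
end

section
/- Assume F is L_F-Lipschitz with F(0) = 0. Then the concatenated SPOS drift satisfies ‖F_Θ(Θ)‖² ≤ (3·β⁻²·L_F² + 3·L_F² + 48/η⁴)·‖Θ‖² for every Θ ∈ (ℝ^d)^M. -/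
/-!
The Gaussian weights lie in `[0, 1]` and `∇K(x) = g • x` with `|g| ≤ 2/η²`, so by the triangle
inequality block `i` has norm at most `|b| L ‖θᵢ‖ + L m + c (‖θᵢ‖ + m)`, where `m` is the mean of
the `‖θⱼ‖`, `b = β⁻¹` and `c = 2/η²`. Squaring with `(x + y + z)² ≤ 3 (x² + y² + z²)`, using
`m² ≤ mean ‖θⱼ‖²` and summing over `i` gives the constant `3 b² L² + 3 L² + 12 c²`.
-/

open Finset

section InteractingDrift

variable {E ι : Type*} [SeminormedAddCommGroup E] [NormedSpace ℝ E] [Fintype ι]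

/-- For SPOS, `b = β⁻¹`, `k i j = K (θ i - θ j)` and `g i j • (θ i - θ j) = ∇K (θ i - θ j)`. -/
noncomputable def interactingDrift (b : ℝ) (F : E → E) (k g : ι → ι → ℝ) (θ : ι → E) (i : ι) :
    E :=
  b • F (θ i) + (Fintype.card ι : ℝ)⁻¹ • ∑ j, k i j • F (θ j)
    - (Fintype.card ι : ℝ)⁻¹ • ∑ j, g i j • (θ i - θ j)

theorem norm_inv_card_smul_sum_le {v : ι → E} {u : ι → ℝ} (h : ∀ j, ‖v j‖ ≤ u j) :
    ‖(Fintype.card ι : ℝ)⁻¹ • ∑ j, v j‖ ≤ (∑ j, u j) / Fintype.card ι := by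
  rw [norm_smul, norm_inv, Real.norm_natCast, inv_mul_eq_div]
  gcongr
  exact (norm_sum_le _ _).trans (sum_le_sum fun j _ => h j)

variable {b L c : ℝ} {F : E → E} {k g : ι → ι → ℝ}

theorem norm_interactingDrift_le (hF : ∀ x, ‖F x‖ ≤ L * ‖x‖) (hk : ∀ i j, |k i j| ≤ 1)
    (hg : ∀ i j, |g i j| ≤ c) (θ : ι → E) (i : ι) :
    ‖interactingDrift b F k g θ i‖ ≤
      |b| * (L * ‖θ i‖) + L * ((∑ j, ‖θ j‖) / Fintype.card ι)
        + c * (‖θ i‖ + (∑ j, ‖θ j‖) / Fintype.card ι) := by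
  have hc : 0 ≤ c := (abs_nonneg _).trans (hg i i)
  have hcard : (Fintype.card ι : ℝ) ≠ 0 := by
    have : Nonempty ι := ⟨i⟩
    exact Nat.cast_ne_zero.mpr Fintype.card_ne_zero
  have hconf : ‖b • F (θ i)‖ ≤ |b| * (L * ‖θ i‖) := by
    rw [norm_smul, Real.norm_eq_abs]
    exact mul_le_mul_of_nonneg_left (hF _) (abs_nonneg b)
  have hkern : ‖(Fintype.card ι : ℝ)⁻¹ • ∑ j, k i j • F (θ j)‖ ≤
      (∑ j, L * ‖θ j‖) / Fintype.card ι := by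
    refine norm_inv_card_smul_sum_le fun j => ?_
    rw [norm_smul, Real.norm_eq_abs]
    exact (mul_le_of_le_one_left (norm_nonneg _) (hk i j)).trans (hF _)
  have hrep : ‖(Fintype.card ι : ℝ)⁻¹ • ∑ j, g i j • (θ i - θ j)‖ ≤
      (∑ j, c * (‖θ i‖ + ‖θ j‖)) / Fintype.card ι := by
    refine norm_inv_card_smul_sum_le fun j => ?_
    rw [norm_smul, Real.norm_eq_abs]
    exact mul_le_mul (hg i j) (norm_sub_le _ _) (norm_nonneg _) hc
  have hkern_eq : (∑ j, L * ‖θ j‖) / Fintype.card ι = L * ((∑ j, ‖θ j‖) / Fintype.card ι) := by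
    rw [← mul_sum, mul_div_assoc]
  have hrep_eq : (∑ j, c * (‖θ i‖ + ‖θ j‖)) / Fintype.card ι =
      c * (‖θ i‖ + (∑ j, ‖θ j‖) / Fintype.card ι) := by
    rw [← mul_sum, sum_add_distrib, sum_const, card_univ, nsmul_eq_mul]
    field_simp
  rw [← hkern_eq, ← hrep_eq]
  exact (norm_sub_le _ _).trans (add_le_add ((norm_add_le _ _).trans (add_le_add hconf hkern)) hrep)

theorem norm_interactingDrift_sq_le (hF : ∀ x, ‖F x‖ ≤ L * ‖x‖) (hk : ∀ i j, |k i j| ≤ 1)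
    (hg : ∀ i j, |g i j| ≤ c) (θ : ι → E) (i : ι) :
    ‖interactingDrift b F k g θ i‖ ^ 2 ≤
      (3 * b ^ 2 * L ^ 2 + 6 * c ^ 2) * ‖θ i‖ ^ 2
        + (3 * L ^ 2 + 6 * c ^ 2) * ((∑ j, ‖θ j‖ ^ 2) / Fintype.card ι) := by
  set m := (∑ j, ‖θ j‖) / Fintype.card ι
  set q := (∑ j, ‖θ j‖ ^ 2) / Fintype.card ι
  have hmq : m ^ 2 ≤ q := sum_div_card_sq_le_sum_sq_div_card
  have hmean : (‖θ i‖ + m) ^ 2 ≤ 2 * (‖θ i‖ ^ 2 + q) :=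
    add_sq_le.trans (by gcongr)
  calc ‖interactingDrift b F k g θ i‖ ^ 2
      ≤ (|b| * (L * ‖θ i‖) + L * m + c * (‖θ i‖ + m)) ^ 2 :=
        pow_le_pow_left₀ (norm_nonneg _) (norm_interactingDrift_le hF hk hg θ i) 2
    _ ≤ 3 * ((|b| * (L * ‖θ i‖)) ^ 2 + (L * m) ^ 2 + (c * (‖θ i‖ + m)) ^ 2) := by
        nlinarith [sq_nonneg (|b| * (L * ‖θ i‖) - L * m), sq_nonneg (L * m - c * (‖θ i‖ + m)),
          sq_nonneg (|b| * (L * ‖θ i‖) - c * (‖θ i‖ + m))]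
    _ = 3 * (b ^ 2 * L ^ 2 * ‖θ i‖ ^ 2 + L ^ 2 * m ^ 2 + c ^ 2 * (‖θ i‖ + m) ^ 2) := by
        rw [mul_pow, sq_abs]
        ring
    _ ≤ 3 * (b ^ 2 * L ^ 2 * ‖θ i‖ ^ 2 + L ^ 2 * q + c ^ 2 * (2 * (‖θ i‖ ^ 2 + q))) := by
        gcongr
    _ = _ := by ring

theorem sum_norm_interactingDrift_sq_le (hF : ∀ x, ‖F x‖ ≤ L * ‖x‖) (hk : ∀ i j, |k i j| ≤ 1)
    (hg : ∀ i j, |g i j| ≤ c) (θ : ι → E) :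
    ∑ i, ‖interactingDrift b F k g θ i‖ ^ 2 ≤
      (3 * b ^ 2 * L ^ 2 + 3 * L ^ 2 + 12 * c ^ 2) * ∑ i, ‖θ i‖ ^ 2 := by
  rcases isEmpty_or_nonempty ι with hι | hι
  · simp
  have hcard : (Fintype.card ι : ℝ) ≠ 0 := Nat.cast_ne_zero.mpr Fintype.card_ne_zero
  calc ∑ i, ‖interactingDrift b F k g θ i‖ ^ 2
      ≤ ∑ i, ((3 * b ^ 2 * L ^ 2 + 6 * c ^ 2) * ‖θ i‖ ^ 2
          + (3 * L ^ 2 + 6 * c ^ 2) * ((∑ j, ‖θ j‖ ^ 2) / Fintype.card ι)) :=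
        sum_le_sum fun i _ => norm_interactingDrift_sq_le hF hk hg θ i
    _ = (3 * b ^ 2 * L ^ 2 + 3 * L ^ 2 + 12 * c ^ 2) * ∑ i, ‖θ i‖ ^ 2 := by
        rw [sum_add_distrib, ← mul_sum, sum_const, card_univ, nsmul_eq_mul]
        field_simp
        ring

end InteractingDrift

theorem spos_concatenated_drift_growth_general
    (d M : ℕ)
    (η β : ℝ)
    (F : EuclideanSpace ℝ (Fin d) → EuclideanSpace ℝ (Fin d))
    (L_F : ℝ)
    (hF_lip : ∀ x y : EuclideanSpace ℝ (Fin d), ‖F x - F y‖ ≤ L_F * ‖x - y‖)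
    (hF0 : F 0 = 0)
    (Θ : Fin M → EuclideanSpace ℝ (Fin d)) :
    ∑ i : Fin M,
      ‖β⁻¹ • F (Θ i)
          + (M : ℝ)⁻¹ • ∑ j : Fin M,
              Real.exp (-‖Θ i - Θ j‖ ^ 2 / η ^ 2) • F (Θ j)
          - (M : ℝ)⁻¹ • ∑ j : Fin M,
              (-(2 / η ^ 2 * Real.exp (-‖Θ i - Θ j‖ ^ 2 / η ^ 2))) • (Θ i - Θ j)‖ ^ 2
      ≤ (3 * β⁻¹ ^ 2 * L_F ^ 2 + 3 * L_F ^ 2 + 48 / η ^ 4) *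
          ∑ i : Fin M, ‖Θ i‖ ^ 2 := by
  have hF : ∀ x, ‖F x‖ ≤ L_F * ‖x‖ := fun x => by simpa [hF0] using hF_lip x 0
  have hgauss : ∀ i j, Real.exp (-‖Θ i - Θ j‖ ^ 2 / η ^ 2) ≤ 1 := fun i j =>
    Real.exp_le_one_iff.mpr (div_nonpos_of_nonpos_of_nonneg (by simp) (sq_nonneg η))
  have hk : ∀ i j, |Real.exp (-‖Θ i - Θ j‖ ^ 2 / η ^ 2)| ≤ 1 := fun i j => by
    rw [abs_of_pos (Real.exp_pos _)]
    exact hgauss i j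
  have hg : ∀ i j, |-(2 / η ^ 2 * Real.exp (-‖Θ i - Θ j‖ ^ 2 / η ^ 2))| ≤ 2 / η ^ 2 :=
    fun i j => by
      rw [abs_neg, abs_of_nonneg (by positivity)]
      exact mul_le_of_le_one_right (by positivity) (hgauss i j)
  have h := sum_norm_interactingDrift_sq_le (b := β⁻¹) hF hk hg Θ
  simp only [interactingDrift, Fintype.card_fin] at h
  convert h using 2
  ring

/-- Lemma H.2: if `F` is `L_F`-Lipschitz with `F 0 = 0`, then the
concatenated SPOS drift with the Gaussian kernel satisfies
`‖F_Θ(Θ)‖² ≤ (3β⁻²L_F² + 3L_F² + 48/η⁴)‖Θ‖²` (ℓ² product norm as sums). -/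
theorem spos_concatenated_drift_growth
    (d M : ℕ) (hd : 1 ≤ d) (hM : 1 ≤ M)
    (η β : ℝ) (hη : 0 < η) (hβ : 0 < β)
    (F : EuclideanSpace ℝ (Fin d) → EuclideanSpace ℝ (Fin d))
    (L_F : ℝ)
    (hF_lip : ∀ x y : EuclideanSpace ℝ (Fin d), ‖F x - F y‖ ≤ L_F * ‖x - y‖)
    (hF0 : F 0 = 0)
    (Θ : Fin M → EuclideanSpace ℝ (Fin d)) :
    ∑ i : Fin M,
      ‖β⁻¹ • F (Θ i)
          + (M : ℝ)⁻¹ • ∑ j : Fin M,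
              Real.exp (-‖Θ i - Θ j‖ ^ 2 / η ^ 2) • F (Θ j)
          - (M : ℝ)⁻¹ • ∑ j : Fin M,
              (-(2 / η ^ 2 * Real.exp (-‖Θ i - Θ j‖ ^ 2 / η ^ 2))) • (Θ i - Θ j)‖ ^ 2
      ≤ (3 * β⁻¹ ^ 2 * L_F ^ 2 + 3 * L_F ^ 2 + 48 / η ^ 4) *
          ∑ i : Fin M, ‖Θ i‖ ^ 2 :=
  spos_concatenated_drift_growth_general d M η β F L_F hF_lip hF0 Θ
end

section
/- Let H be a real inner product space, let G : H → H be L-Lipschitz, and let x_1, …, x_M, y_1, …, y_M ∈ H. Then Σ_{i=1}^M ‖(1/M) Σ_{j=1}^M (G(x_i − x_j) − G(y_i − y_j))‖² ≤ 4·L²·Σ_{i=1}^M ‖x_i − y_i‖². -/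
/-!
Each summand is the squared norm of an average, hence at most the average of the squared norms.
By the Lipschitz bound and `(u + v)² ≤ 2(u² + v²)`, the `(i, j)` term is at most
`2 L² (‖xᵢ - yᵢ‖² + ‖xⱼ - yⱼ‖²)`, and summing this over all pairs and dividing by `M`
gives `4 L² Σᵢ ‖xᵢ - yᵢ‖²`.
-/

open Finset

theorem norm_inv_card_smul_sum_sq_le {ι E : Type*} [SeminormedAddCommGroup E] [NormedSpace ℝ E]
    (s : Finset ι) (z : ι → E) :
    ‖(#s : ℝ)⁻¹ • ∑ j ∈ s, z j‖ ^ 2 ≤ (#s : ℝ)⁻¹ * ∑ j ∈ s, ‖z j‖ ^ 2 := by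
  rcases s.eq_empty_or_nonempty with rfl | hs
  · simp
  have hcard : (0 : ℝ) < #s := by exact_mod_cast hs.card_pos
  calc ‖(#s : ℝ)⁻¹ • ∑ j ∈ s, z j‖ ^ 2
      = (#s : ℝ)⁻¹ ^ 2 * ‖∑ j ∈ s, z j‖ ^ 2 := by
        rw [norm_smul, mul_pow, Real.norm_of_nonneg (by positivity)]
    _ ≤ (#s : ℝ)⁻¹ ^ 2 * (∑ j ∈ s, ‖z j‖) ^ 2 := by gcongr; exact norm_sum_le _ _
    _ ≤ (#s : ℝ)⁻¹ ^ 2 * (#s * ∑ j ∈ s, ‖z j‖ ^ 2) := by gcongr; exact sq_sum_le_card_mul_sum_sq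
    _ = (#s : ℝ)⁻¹ * ∑ j ∈ s, ‖z j‖ ^ 2 := by field_simp

theorem LipschitzWith.norm_map_sub_sub_map_sub_sq_le {E F : Type*} [SeminormedAddCommGroup E]
    [SeminormedAddCommGroup F] {L : NNReal} {G : E → F} (hG : LipschitzWith L G) (a b c d : E) :
    ‖G (a - b) - G (c - d)‖ ^ 2 ≤ 2 * (L : ℝ) ^ 2 * (‖a - c‖ ^ 2 + ‖b - d‖ ^ 2) := by
  have hdiff : (a - b) - (c - d) = (a - c) - (b - d) := by abel
  calc ‖G (a - b) - G (c - d)‖ ^ 2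
      ≤ ((L : ℝ) * (‖a - c‖ + ‖b - d‖)) ^ 2 := by
        gcongr
        calc ‖G (a - b) - G (c - d)‖ ≤ L * ‖(a - b) - (c - d)‖ := hG.norm_sub_le _ _
          _ ≤ L * (‖a - c‖ + ‖b - d‖) := by rw [hdiff]; gcongr; exact _root_.norm_sub_le _ _
    _ ≤ (L : ℝ) ^ 2 * (2 * (‖a - c‖ ^ 2 + ‖b - d‖ ^ 2)) := by rw [mul_pow]; gcongr; exact add_sq_le
    _ = 2 * (L : ℝ) ^ 2 * (‖a - c‖ ^ 2 + ‖b - d‖ ^ 2) := by ring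

theorem Finset.sum_sum_add {ι R : Type*} [CommSemiring R] (s : Finset ι) (f : ι → R) :
    ∑ i ∈ s, ∑ j ∈ s, (f i + f j) = 2 * #s * ∑ i ∈ s, f i := by
  simp only [sum_add_distrib, sum_const, nsmul_eq_mul, ← mul_sum]
  ring

/-- ω⁴ bound in Lemma E.2: for `L`-Lipschitz `G` on a real inner
product space, `Σ_i ‖(1/M) Σ_j (G(x_i−x_j) − G(y_i−y_j))‖² ≤ 4L² Σ_i ‖x_i−y_i‖²`. -/
theorem interaction_term_bound
    {H : Type*} [NormedAddCommGroup H] [InnerProductSpace ℝ H]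
    (M : ℕ) (L : NNReal) (G : H → H) (hG : LipschitzWith L G)
    (x y : Fin M → H) :
    ∑ i : Fin M, ‖(M : ℝ)⁻¹ • ∑ j : Fin M, (G (x i - x j) - G (y i - y j))‖ ^ 2
      ≤ 4 * (L : ℝ) ^ 2 * ∑ i : Fin M, ‖x i - y i‖ ^ 2 := by
  rcases M.eq_zero_or_pos with rfl | hM
  · simp
  calc ∑ i, ‖(M : ℝ)⁻¹ • ∑ j, (G (x i - x j) - G (y i - y j))‖ ^ 2
      ≤ ∑ i, (M : ℝ)⁻¹ * ∑ j, ‖G (x i - x j) - G (y i - y j)‖ ^ 2 :=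
        sum_le_sum fun i _ => by
          simpa only [card_univ, Fintype.card_fin] using
            norm_inv_card_smul_sum_sq_le univ fun j => G (x i - x j) - G (y i - y j)
    _ ≤ ∑ i, (M : ℝ)⁻¹ * ∑ j, 2 * (L : ℝ) ^ 2 * (‖x i - y i‖ ^ 2 + ‖x j - y j‖ ^ 2) := by
        gcongr with i _ j _
        exact hG.norm_map_sub_sub_map_sub_sq_le _ _ _ _
    _ = 4 * (L : ℝ) ^ 2 * ∑ i, ‖x i - y i‖ ^ 2 := by
        simp only [← mul_sum, sum_sum_add, card_univ, Fintype.card_fin]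
        field_simp
        ring
end

section
/- Let H be a real inner product space and let G : H → H be odd (G(−z) = −G(z)) and L-Lipschitz. Then for any x_1, …, x_M, y_1, …, y_M ∈ H: Σ_{i,j=1}^M ⟨G(x_i − x_j) − G(y_i − y_j), x_i − y_i⟩ ≤ 2·L·M·Σ_{i=1}^M ‖x_i − y_i‖². -/
open Finset
open scoped InnerProductSpace

/-!
Write `dᵢ = xᵢ - yᵢ`. Since `(xᵢ - xⱼ) - (yᵢ - yⱼ) = dᵢ - dⱼ`, Cauchy–Schwarz and the Lipschitz
bound give `⟨G(xᵢ - xⱼ) - G(yᵢ - yⱼ), dᵢ⟩ ≤ L (‖dᵢ‖ + ‖dⱼ‖) ‖dᵢ‖ ≤ L (3/2 ‖dᵢ‖² + 1/2 ‖dⱼ‖²)`,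
and summing over `i, j` turns the right-hand side into `2 L M Σᵢ ‖dᵢ‖²`.
-/

lemma add_mul_self_le_three_halves_sq_add_half_sq (s r : ℝ) :
    (s + r) * s ≤ 3 / 2 * s ^ 2 + 1 / 2 * r ^ 2 := by
  nlinarith [sq_nonneg (s - r)]

lemma inner_sub_le_of_lipschitzWith {H : Type*} [NormedAddCommGroup H] [InnerProductSpace ℝ H]
    {L : NNReal} {G : H → H} (hG : LipschitzWith L G) (a b v : H) :
    ⟪G a - G b, v⟫_ℝ ≤ L * ‖a - b‖ * ‖v‖ :=
  calc ⟪G a - G b, v⟫_ℝ ≤ ‖G a - G b‖ * ‖v‖ := real_inner_le_norm _ _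
    _ ≤ L * ‖a - b‖ * ‖v‖ := by
      gcongr
      simpa only [dist_eq_norm] using hG.dist_le_mul a b

lemma inner_sub_sub_le_of_lipschitzWith {H : Type*} [NormedAddCommGroup H]
    [InnerProductSpace ℝ H] {L : NNReal} {G : H → H} (hG : LipschitzWith L G) (a b c e : H) :
    ⟪G (a - c) - G (b - e), a - b⟫_ℝ
      ≤ L * (3 / 2 * ‖a - b‖ ^ 2 + 1 / 2 * ‖c - e‖ ^ 2) := by
  have hsplit : a - c - (b - e) = (a - b) - (c - e) := by abel
  calc ⟪G (a - c) - G (b - e), a - b⟫_ℝ ≤ L * ‖(a - b) - (c - e)‖ * ‖a - b‖ := by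
        simpa only [hsplit] using inner_sub_le_of_lipschitzWith hG (a - c) (b - e) (a - b)
    _ ≤ L * ((‖a - b‖ + ‖c - e‖) * ‖a - b‖) := by
        rw [mul_assoc]
        gcongr
        exact norm_sub_le _ _
    _ ≤ L * (3 / 2 * ‖a - b‖ ^ 2 + 1 / 2 * ‖c - e‖ ^ 2) := by
        gcongr
        exact add_mul_self_le_three_halves_sq_add_half_sq _ _

lemma sum_sum_three_halves_add_half {ι : Type*} [Fintype ι] (f : ι → ℝ) :
    ∑ i, ∑ j, (3 / 2 * f i + 1 / 2 * f j) = 2 * Fintype.card ι * ∑ i, f i := by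
  simp only [sum_add_distrib, sum_const, card_univ, nsmul_eq_mul, ← mul_sum]
  ring

theorem odd_lipschitz_pairwise_bound_general
    {H : Type*} [NormedAddCommGroup H] [InnerProductSpace ℝ H]
    (M : ℕ) (L : NNReal) (G : H → H)
    (hG : LipschitzWith L G)
    (x y : Fin M → H) :
    ∑ i : Fin M, ∑ j : Fin M, ⟪G (x i - x j) - G (y i - y j), x i - y i⟫_ℝ
      ≤ 2 * (L : ℝ) * M * ∑ i : Fin M, ‖x i - y i‖ ^ 2 :=
  calc ∑ i : Fin M, ∑ j : Fin M, ⟪G (x i - x j) - G (y i - y j), x i - y i⟫_ℝ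
      ≤ ∑ i : Fin M, ∑ j : Fin M,
          (L : ℝ) * (3 / 2 * ‖x i - y i‖ ^ 2 + 1 / 2 * ‖x j - y j‖ ^ 2) :=
        sum_le_sum fun i _ ↦ sum_le_sum fun j _ ↦
          inner_sub_sub_le_of_lipschitzWith hG (x i) (y i) (x j) (y j)
    _ = 2 * (L : ℝ) * M * ∑ i : Fin M, ‖x i - y i‖ ^ 2 := by
        simp only [← mul_sum, sum_sum_three_halves_add_half, Fintype.card_fin]
        ring

/-- B_{ij}/ξ²_{ij} bound: for an odd `L`-Lipschitz map `G` on a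
real inner product space,
`Σ_{i,j} ⟨G(x_i−x_j) − G(y_i−y_j), x_i−y_i⟩ ≤ 2LM Σ_i ‖x_i−y_i‖²`. -/
theorem odd_lipschitz_pairwise_bound
    {H : Type*} [NormedAddCommGroup H] [InnerProductSpace ℝ H]
    (M : ℕ) (L : NNReal) (G : H → H)
    (hodd : ∀ z : H, G (-z) = -G z) (hG : LipschitzWith L G)
    (x y : Fin M → H) :
    ∑ i : Fin M, ∑ j : Fin M, ⟪G (x i - x j) - G (y i - y j), x i - y i⟫_ℝ
      ≤ 2 * (L : ℝ) * M * ∑ i : Fin M, ‖x i - y i‖ ^ 2 :=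
  odd_lipschitz_pairwise_bound_general M L G hG x y
end
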